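/- Let C' be the biased Markov chain of an abstraction (C,F) →^α (C^•,F^•), let L : S⁺ → ℝ be such that f_{L,T} is B-bounded, γ the likelihood of (C,C'), and L' = L·γ. Then for every infinite path ρ of C' starting at s₀: f_{L',T}(ρ) = L(ρ_{≤ first_T(ρ)}) · μ^•(α(s₀)) if ρ visits T, and 0 otherwise. Consequently f_{L',T} is B-bounded, and in the special case L ≡ 1, f_{L',T} = μ^•(α(s₀)) · 𝟙_{◇T} on paths from s₀. -/

import Mathlib

open scoped ENNReal NNReal BigOperators
open Filter

noncomputable section

variable {S : Type*}

/-- Probability of following a finite path (list of successive states). -/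
def pathProb (P : S → S → ℝ≥0∞) : List S → ℝ≥0∞
  | [] => 1
  | [_] => 1
  | a :: b :: l => P a b * pathProb P (b :: l)

/-- `l` is a finite path starting at `s` that visits `T` for the first time
at its last element. -/
def FirstHitPath (T : Set S) (s : S) (l : List S) : Prop :=
  l.head? = some s ∧ ∃ h : l ≠ [], l.getLast h ∈ T ∧
    ∀ i : Fin l.length, (i : ℕ) + 1 < l.length → l.get i ∉ T

/-- Probability of eventually reaching `T` from `s`. -/
def reachProb (P : S → S → ℝ≥0∞) (T : Set S) (s : S) : ℝ≥0∞ :=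
  ∑' l : {l : List S // FirstHitPath T s l}, pathProb P (l : List S)

/-- The avoid set: states from which `T` is unreachable. -/
def Av (P : S → S → ℝ≥0∞) (T : Set S) : Set S := {s | reachProb P T s = 0}

/-- Probability that, starting from `s`, the chain stays outside `R`
during its first `n` steps (i.e. the hitting time of `R` is `> n`). -/
def surviveProb (P : S → S → ℝ≥0∞) (R : Set S) (s : S) (n : ℕ) : ℝ≥0∞ :=
  ∑' l : {l : List S // l.length = n + 1 ∧ l.head? = some s ∧ ∀ x ∈ l, x ∉ R},
    pathProb P (l : List S)

/-- Expected hitting time of `R` from `s`, via `E τ = ∑_{n≥0} Pr(τ > n)`. -/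
def expHittingTime (P : S → S → ℝ≥0∞) (R : Set S) (s : S) : ℝ≥0∞ :=
  ∑' n : ℕ, surviveProb P R s n

/-- Probability that `X_i ∈ A` for all `i ≥ m`, starting from `s`
(as the infimum over finite horizons). -/
def confineProb (P : S → S → ℝ≥0∞) (A : Set S) (s : S) (m : ℕ) : ℝ≥0∞ :=
  ⨅ n : ℕ, ∑' l : {l : List S // l.length = n + 1 ∧ l.head? = some s ∧
      ∀ i : Fin l.length, m ≤ (i : ℕ) → l.get i ∈ A}, pathProb P (l : List S)

/-- Expected reward collected at the first visit of `T`. -/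
def expReward (P : S → S → ℝ≥0∞) (L : List S → ℝ≥0∞) (T : Set S) (s : S) : ℝ≥0∞ :=
  ∑' l : {l : List S // FirstHitPath T s l}, L l * pathProb P (l : List S)

/-- `P` is a stochastic matrix. -/
def IsStochastic (P : S → S → ℝ≥0∞) : Prop := ∀ s, ∑' s', P s s' = 1

/-- States of the biased chain other than `s₋`. -/
abbrev SA (P : S → S → ℝ≥0∞) (F : Set S) := {s : S // s ∉ Av P F}

/-- `P'` (on `(S ∖ Av(F)) ⊎ {s₋}`, with `none = s₋`) is a biased Markov chain
of `(C, T, F)`. -/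
def IsBiased (P : S → S → ℝ≥0∞) (T F : Set S)
    (P' : Option (SA P F) → Option (SA P F) → ℝ≥0∞) : Prop :=
  IsStochastic P' ∧
  P' none none = 1 ∧
  (∀ s : SA P F, s.val ∈ T → P' (some s) (some s) = 1) ∧
  (∀ s s' : SA P F, 0 < P s.val s'.val → 0 < P' (some s) (some s'))

/-- `(C^•, F^•)` together with `α` is an abstraction of `(C, F)`. -/
def IsAbstraction (P : S → S → ℝ≥0∞) (F : Set S)
    {S' : Type*} (P' : S' → S' → ℝ≥0∞) (F' : Set S')
    (α : SA P F → S') : Prop :=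
  (∀ s : SA P F, s.val ∈ F → α s ∈ F') ∧
  (∀ s : SA P F, s.val ∉ F →
    ∑' s' : SA P F, P s.val s'.val * reachProb P' F' (α s')
      ≤ reachProb P' F' (α s))

/-- The decreasing ratio `h(s)` of an abstraction. -/
def hRatio (P : S → S → ℝ≥0∞) (F : Set S)
    {S' : Type*} (P' : S' → S' → ℝ≥0∞) (F' : Set S')
    (α : SA P F → S') (s : SA P F) : ℝ≥0∞ :=
  (∑' s' : SA P F, P s.val s'.val * reachProb P' F' (α s'))
    / reachProb P' F' (α s)

/-- The biased Markov chain constructed from an abstraction. -/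
def biasedKernel (P : S → S → ℝ≥0∞) (F : Set S)
    {S' : Type*} (P' : S' → S' → ℝ≥0∞) (F' : Set S')
    (α : SA P F → S') :
    Option (SA P F) → Option (SA P F) → ℝ≥0∞
  | none, none => 1
  | none, some _ => 0
  | some s, none => 1 - hRatio P F P' F' α s
  | some s, some s' =>
      P s.val s'.val * reachProb P' F' (α s') / reachProb P' F' (α s)

/-- The random walk `W^p` on `ℕ`: `0` absorbing, up with probability `p`,
down with probability `1 - p`. -/
def walkKernel (p : ℝ≥0∞) : ℕ → ℕ → ℝ≥0∞ := fun m n =>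
  if m = 0 then (if n = 0 then 1 else 0)
  else if n = m + 1 then p
  else if n + 1 = m then 1 - p
  else 0

/-- `(C, λ)` is a layered Markov chain. -/
def IsLMC (P : S → S → ℝ≥0∞) (lam : S → ℕ) : Prop :=
  (∀ s s', 0 < P s s' → (lam s : ℤ) ≤ (lam s' : ℤ) + 1) ∧
  (∀ n : ℕ, {s : S | lam s = n}.Finite)

/-- Total probability of increasing the level. -/
def Pup (P : S → S → ℝ≥0∞) (lam : S → ℕ) (s : S) : ℝ≥0∞ :=
  ∑' s' : {s' : S // lam s < lam s'}, P s s'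

/-- Total probability of decreasing the level (by one). -/
def Pdown (P : S → S → ℝ≥0∞) (lam : S → ℕ) (s : S) : ℝ≥0∞ :=
  ∑' s' : {s' : S // lam s' + 1 = lam s}, P s s'

/-- Total probability of keeping the same level. -/
def Peq (P : S → S → ℝ≥0∞) (lam : S → ℕ) (s : S) : ℝ≥0∞ :=
  ∑' s' : {s' : S // lam s' = lam s}, P s s'

/-- `(C, λ)` is `(p⁺, N₀)`-divergent. -/
def Divergent (P : S → S → ℝ≥0∞) (lam : S → ℕ) (pplus : ℝ≥0∞) (N₀ : ℕ) : Prop :=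
  1/2 < pplus ∧ ∀ s : S, N₀ < lam s → Peq P lam s < 1 →
    pplus ≤ Pup P lam s / (Pdown P lam s + Pup P lam s)

end

/-! The biased chain is the Doob transform of `C` by `h = μ^• ∘ α`, so along a path `s₀ … sₙ`
its probability telescopes to `Pr_C(s₀ … sₙ) · h(sₙ) / h(s₀)`. A path that first hits `T ⊆ F`
ends where `h = 1`, so its likelihood is exactly `h(s₀) = μ^•(α s₀) ≤ 1`. Dividing by `h` is
harmless: a positive biased step out of `x` forces `h(x) ≠ 0` by the abstraction inequality, and
a path of positive probability ending in `T` never visits the absorbing sink `s₋`. -/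

section PathProb

variable {X : Type*}

theorem pathProb_cons_cons (Q : X → X → ℝ≥0∞) (a b : X) (l : List X) :
    pathProb Q (a :: b :: l) = Q a b * pathProb Q (b :: l) := rfl

theorem pathProb_map {Y : Type*} (Q : Y → Y → ℝ≥0∞) (f : X → Y) :
    ∀ l : List X, pathProb Q (l.map f) = pathProb (fun x y => Q (f x) (f y)) l
  | [] => rfl
  | [_] => rfl
  | a :: b :: l => congrArg (Q (f a) (f b) * ·) (pathProb_map Q f (b :: l))

theorem pathProb_le_one {Q : X → X → ℝ≥0∞} (hQ : IsStochastic Q) :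
    ∀ l : List X, pathProb Q l ≤ 1
  | [] => le_rfl
  | [_] => le_rfl
  | a :: b :: l => by
      rw [pathProb_cons_cons]
      exact mul_le_one' ((ENNReal.le_tsum b).trans (hQ a).le) (pathProb_le_one hQ (b :: l))

theorem forall_mem_of_pathProb_pos {Q : X → X → ℝ≥0∞} {p : X → Prop}
    (hQ : ∀ x y, 0 < Q x y → p y → p x) :
    ∀ (a : X) (t : List X), 0 < pathProb Q (a :: t) →
      p ((a :: t).getLast (List.cons_ne_nil a t)) → ∀ x ∈ a :: t, p x
  | a, [], _, ha => by simpa using ha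
  | a, b :: t, hpos, hlast => by
      rw [pathProb_cons_cons, CanonicallyOrderedAdd.mul_pos] at hpos
      have ih := forall_mem_of_pathProb_pos hQ b t hpos.2 (by rwa [List.getLast_cons_cons] at hlast)
      rw [List.forall_mem_cons]
      exact ⟨hQ a b hpos.1 (ih b List.mem_cons_self), ih⟩

noncomputable def doobTransform (Q : X → X → ℝ≥0∞) (h : X → ℝ≥0∞) : X → X → ℝ≥0∞ :=
  fun x y => Q x y * h y / h x

theorem mul_pathProb_doobTransform (Q : X → X → ℝ≥0∞) (h : X → ℝ≥0∞) :
    ∀ (a : X) (t : List X), (∀ x ∈ a :: t, h x ≠ 0 ∧ h x ≠ ⊤) →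
      h a * pathProb (doobTransform Q h) (a :: t) =
        pathProb Q (a :: t) * h ((a :: t).getLast (List.cons_ne_nil a t))
  | a, [], _ => by simp [pathProb, mul_comm]
  | a, b :: t, hh => by
      obtain ⟨ha0, hatop⟩ := hh a List.mem_cons_self
      have ih := mul_pathProb_doobTransform Q h b t fun x hx => hh x (List.mem_cons_of_mem a hx)
      calc h a * pathProb (doobTransform Q h) (a :: b :: t)
          = h a * (Q a b * h b / h a) * pathProb (doobTransform Q h) (b :: t) := by
            rw [pathProb_cons_cons, doobTransform, mul_assoc]
        _ = Q a b * (h b * pathProb (doobTransform Q h) (b :: t)) := by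
            rw [ENNReal.mul_div_cancel ha0 hatop, mul_assoc]
        _ = pathProb Q (a :: b :: t) * h ((a :: b :: t).getLast (List.cons_ne_nil a _)) := by
            rw [ih, pathProb_cons_cons, List.getLast_cons_cons, mul_assoc]

theorem none_notMem_of_pathProb_pos {Q : Option X → Option X → ℝ≥0∞}
    (hQ : ∀ x, Q none (some x) = 0) {l : List (Option X)} (hl : l ≠ [])
    (hpos : 0 < pathProb Q l) (hlast : (l.getLast hl).isSome) : none ∉ l := by
  obtain ⟨a, t, rfl⟩ := List.exists_cons_of_ne_nil hl
  have hsome := forall_mem_of_pathProb_pos (p := fun x => x.isSome) ?_ a t hpos hlast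
  · exact fun hnone => by simpa using hsome none hnone
  · rintro (_ | x) (_ | y) hxy hy
    · simp at hy
    · simp [hQ] at hxy
    all_goals rfl

theorem map_some_reduceOption :
    ∀ {l : List (Option X)}, none ∉ l → l.reduceOption.map some = l
  | [], _ => rfl
  | none :: _, h => absurd List.mem_cons_self h
  | some a :: t, h => by
      rw [List.reduceOption_cons_of_some, List.map_cons,
        map_some_reduceOption fun ht => h (List.mem_cons_of_mem _ ht)]

end PathProb

section FirstHitPath

variable {X : Type*}

theorem firstHitPath_iff {T : Set X} {s : X} {l : List X} :
    FirstHitPath T s l ↔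
      l.head? = some s ∧ ∃ h : l ≠ [], l.getLast h ∈ T ∧ ∀ x ∈ l.dropLast, x ∉ T := by
  suffices (∀ i : Fin l.length, (i : ℕ) + 1 < l.length → l.get i ∉ T) ↔
      ∀ x ∈ l.dropLast, x ∉ T by
    rw [FirstHitPath, this]
  simp only [List.mem_iff_getElem, List.length_dropLast, List.getElem_dropLast, Fin.forall_iff,
    List.get_eq_getElem]
  constructor
  · rintro h x ⟨i, hi, rfl⟩
    exact h i (by omega) (by omega)
  · rintro h i hi hi'
    exact h _ ⟨i, by omega, rfl⟩

theorem firstHitPath_map_iff {Y : Type*} {f : X → Y} (hf : Function.Injective f) {T : Set Y}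
    {s : X} {l : List X} : FirstHitPath T (f s) (l.map f) ↔ FirstHitPath (f ⁻¹' T) s l := by
  simp [firstHitPath_iff, List.head?_map, List.getLast_map, ← List.map_dropLast, hf.eq_iff]

theorem firstHitPath_singleton {T : Set X} {s : X} (hs : s ∈ T) : FirstHitPath T s [s] :=
  firstHitPath_iff.2 ⟨rfl, List.cons_ne_nil s [], hs, by simp⟩

theorem FirstHitPath.eq_singleton {T : Set X} {s : X} {l : List X} (h : FirstHitPath T s l)
    (hs : s ∈ T) : l = [s] := by
  obtain ⟨hhead, -, -, hdrop⟩ := firstHitPath_iff.1 h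
  match l, hhead with
  | [_], rfl => rfl
  | _ :: _ :: _, rfl => exact absurd hs (hdrop _ (by simp))

theorem FirstHitPath.exists_cons_cons {T : Set X} {s : X} {l : List X} (h : FirstHitPath T s l)
    (hs : s ∉ T) : ∃ b t, l = s :: b :: t ∧ FirstHitPath T b (b :: t) := by
  obtain ⟨hhead, hne, hlast, hdrop⟩ := firstHitPath_iff.1 h
  match l, hhead with
  | [_], rfl => exact absurd hlast hs
  | _ :: b :: t, rfl =>
    refine ⟨b, t, rfl, firstHitPath_iff.2 ⟨rfl, List.cons_ne_nil b t, ?_, ?_⟩⟩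
    · rwa [List.getLast_cons_cons] at hlast
    · exact fun x hx => hdrop x (by rw [List.dropLast_cons_cons]; exact List.mem_cons_of_mem _ hx)

end FirstHitPath

section Reach

variable {X : Type*}

theorem reachProb_eq_one_of_mem (Q : X → X → ℝ≥0∞) {T : Set X} {s : X} (hs : s ∈ T) :
    reachProb Q T s = 1 :=
  (tsum_eq_single ⟨[s], firstHitPath_singleton hs⟩
    fun l hl => absurd (Subtype.ext (l.2.eq_singleton hs)) hl).trans rfl

/-- `n` bounds the number of states of the path, not the number of steps. -/
noncomputable def reachProbWithin (Q : X → X → ℝ≥0∞) (T : Set X) (n : ℕ) (s : X) : ℝ≥0∞ :=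
  ∑' l : {l : List X // FirstHitPath T s l}, if l.1.length ≤ n then pathProb Q l else 0

theorem reachProbWithin_le_reachProb (Q : X → X → ℝ≥0∞) (T : Set X) (n : ℕ) (s : X) :
    reachProbWithin Q T n s ≤ reachProb Q T s :=
  ENNReal.tsum_le_tsum fun _ => by split_ifs <;> simp

theorem reachProbWithin_zero (Q : X → X → ℝ≥0∞) (T : Set X) (s : X) :
    reachProbWithin Q T 0 s = 0 :=
  ENNReal.tsum_eq_zero.2 fun l => if_neg (by simpa using (firstHitPath_iff.1 l.2).2.1)

theorem reachProbWithin_succ_le (Q : X → X → ℝ≥0∞) {T : Set X} (n : ℕ) {s : X} (hs : s ∉ T) :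
    reachProbWithin Q T (n + 1) s ≤ ∑' s', Q s s' * reachProbWithin Q T n s' := by
  let e : {l : List X // FirstHitPath T s l} → Σ s', {l : List X // FirstHitPath T s' l} :=
    fun l => ⟨l.1.tail.headD s, l.1.tail, by
      obtain ⟨b, t, hl, hb⟩ := l.2.exists_cons_cons hs
      simpa [hl] using hb⟩
  have he : Function.Injective e := by
    rintro ⟨l₁, h₁⟩ ⟨l₂, h₂⟩ h
    have htail : l₁.tail = l₂.tail := congrArg (fun p => p.2.1) h
    exact Subtype.ext <| (List.cons_head?_tail h₁.1).symm.trans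
      (htail ▸ List.cons_head?_tail h₂.1)
  calc reachProbWithin Q T (n + 1) s
      ≤ ∑' p : Σ s', {l : List X // FirstHitPath T s' l},
          Q s p.1 * if p.2.1.length ≤ n then pathProb Q p.2 else 0 := by
        refine ENNReal.summable.tsum_le_tsum_of_inj e he (fun _ _ => zero_le) ?_ ENNReal.summable
        intro l
        obtain ⟨b, t, hl, -⟩ := l.2.exists_cons_cons hs
        simp [e, hl, pathProb_cons_cons, mul_ite]
    _ = ∑' s', Q s s' * reachProbWithin Q T n s' := by
        simp only [ENNReal.tsum_sigma', ENNReal.tsum_mul_left, reachProbWithin]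

theorem reachProbWithin_le_one {Q : X → X → ℝ≥0∞} (hQ : IsStochastic Q) (T : Set X) (n : ℕ)
    (s : X) : reachProbWithin Q T n s ≤ 1 := by
  induction n generalizing s with
  | zero => simp [reachProbWithin_zero]
  | succ n ih =>
    by_cases hs : s ∈ T
    · exact (reachProbWithin_le_reachProb Q T _ s).trans (reachProb_eq_one_of_mem Q hs).le
    calc reachProbWithin Q T (n + 1) s ≤ ∑' s', Q s s' * reachProbWithin Q T n s' :=
          reachProbWithin_succ_le Q n hs
      _ ≤ ∑' s', Q s s' := ENNReal.tsum_le_tsum fun s' => mul_le_of_le_one_right' (ih s')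
      _ = 1 := hQ s

theorem reachProb_le_one {Q : X → X → ℝ≥0∞} (hQ : IsStochastic Q) (T : Set X) (s : X) :
    reachProb Q T s ≤ 1 := by
  refine ENNReal.summable.tsum_le_of_sum_le fun u => ?_
  calc ∑ l ∈ u, pathProb Q l.1
      = ∑ l ∈ u, if l.1.length ≤ u.sup (fun l => l.1.length) then pathProb Q l.1 else 0 :=
        Finset.sum_congr rfl fun l hl => (if_pos (Finset.le_sup (f := fun l => l.1.length) hl)).symm
    _ ≤ reachProbWithin Q T (u.sup fun l => l.1.length) s :=
        ENNReal.summable.sum_le_tsum u fun _ _ => zero_le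
    _ ≤ 1 := reachProbWithin_le_one hQ T _ s

end Reach

section Biased

variable {S S' : Type*} {P : S → S → ℝ≥0∞} {F : Set S} {P' : S' → S' → ℝ≥0∞} {F' : Set S'}
  {α : SA P F → S'}

theorem pathProb_biasedKernel_map_some (m : List (SA P F)) :
    pathProb (biasedKernel P F P' F' α) (m.map some) =
      pathProb (doobTransform (fun x y => P x.1 y.1) fun x => reachProb P' F' (α x)) m :=
  pathProb_map _ _ m

theorem IsAbstraction.reachProb_ne_zero (habs : IsAbstraction P F P' F' α) {a b : SA P F}
    (hab : 0 < doobTransform (fun x y => P x.1 y.1) (fun x => reachProb P' F' (α x)) a b) :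
    reachProb P' F' (α a) ≠ 0 := by
  by_cases ha : a.1 ∈ F
  · rw [reachProb_eq_one_of_mem P' (habs.1 a ha)]
    exact one_ne_zero
  · intro h0
    have hb : P a b * reachProb P' F' (α b) = 0 :=
      le_zero_iff.1 ((ENNReal.le_tsum b).trans ((habs.2 a ha).trans h0.le))
    simp [doobTransform, hb] at hab

theorem IsAbstraction.pathProb_div_pathProb_biasedKernel (habs : IsAbstraction P F P' F' α)
    (hP : IsStochastic P) (hP' : IsStochastic P') (a : SA P F) (t : List (SA P F))
    (hlast : ((a :: t).getLast (List.cons_ne_nil a t)).1 ∈ F)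
    (hpos : 0 < pathProb (biasedKernel P F P' F' α) ((a :: t).map some)) :
    pathProb P ((a :: t).map Subtype.val) / pathProb (biasedKernel P F P' F' α) ((a :: t).map some)
      = reachProb P' F' (α a) := by
  set μ : SA P F → ℝ≥0∞ := fun x => reachProb P' F' (α x)
  rw [pathProb_biasedKernel_map_some] at hpos ⊢
  have hμ_last : μ ((a :: t).getLast (List.cons_ne_nil a t)) = 1 :=
    reachProb_eq_one_of_mem P' (habs.1 _ hlast)
  have hμ : ∀ x ∈ a :: t, μ x ≠ 0 ∧ μ x ≠ ⊤ := fun x hx =>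
    ⟨forall_mem_of_pathProb_pos (fun _ _ hxy _ => habs.reachProb_ne_zero hxy) a t hpos
        (ne_of_eq_of_ne hμ_last one_ne_zero) x hx,
      ne_top_of_le_ne_top ENNReal.one_ne_top (reachProb_le_one hP' F' _)⟩
  have htel := mul_pathProb_doobTransform (fun x y => P x.1 y.1) μ a t hμ
  rw [hμ_last, mul_one] at htel
  have hne_top : pathProb (doobTransform (fun x y => P x.1 y.1) μ) (a :: t) ≠ ⊤ := by
    intro htop
    have := pathProb_le_one hP ((a :: t).map Subtype.val)
    rw [pathProb_map, ← htel, htop, ENNReal.mul_top (hμ a List.mem_cons_self).1] at this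
    exact absurd this (by simp)
  rw [pathProb_map, ← htel, ENNReal.mul_div_cancel_right hpos.ne' hne_top]

end Biased

open scoped Classical

section Thms

variable {S : Type*}

theorem stmt11_general (P : S → S → ℝ≥0∞) (hP : IsStochastic P)
    (F : Set S) {S' : Type*}
    (P' : S' → S' → ℝ≥0∞) (hP' : IsStochastic P') (F' : Set S')
    (α : SA P F → S') (habs : IsAbstraction P F P' F' α)
    (T : Set S) (hTF : T ⊆ F)
    (L : List S → ℝ) (B : ℝ)
    (hbdd : ∀ (s : S) (l : List S), FirstHitPath T s l → |L l| ≤ B)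
    (s₀ : SA P F) (l : List (Option (SA P F)))
    (hfh : FirstHitPath
      {x : Option (SA P F) | ∃ u : SA P F, x = some u ∧ u.val ∈ T}
      (some s₀) l)
    (hpos : 0 < pathProb (biasedKernel P F P' F' α) l) :
    (if none ∈ l then 0 else
      L (l.reduceOption.map Subtype.val) *
        (pathProb P (l.reduceOption.map Subtype.val) /
          pathProb (biasedKernel P F P' F' α) l).toReal)
      = L (l.reduceOption.map Subtype.val) * (reachProb P' F' (α s₀)).toReal ∧
    |(if none ∈ l then 0 else
      L (l.reduceOption.map Subtype.val) *
        (pathProb P (l.reduceOption.map Subtype.val) /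
          pathProb (biasedKernel P F P' F' α) l).toReal)| ≤ B ∧
    ((∀ l' : List S, L l' = 1) →
      (if none ∈ l then 0 else
        L (l.reduceOption.map Subtype.val) *
          (pathProb P (l.reduceOption.map Subtype.val) /
            pathProb (biasedKernel P F P' F' α) l).toReal)
        = (reachProb P' F' (α s₀)).toReal) := by
  have hnone : none ∉ l := by
    obtain ⟨-, hl, ⟨u, hu, -⟩, -⟩ := hfh
    exact none_notMem_of_pathProb_pos (fun _ => rfl) hl hpos (by rw [hu]; rfl)
  obtain ⟨m, rfl⟩ : ∃ m : List (SA P F), l = m.map some := ⟨_, (map_some_reduceOption hnone).symm⟩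
  have hfhm : FirstHitPath (Subtype.val ⁻¹' T) s₀ m := by
    rw [firstHitPath_map_iff (Option.some_injective _)] at hfh
    convert hfh using 1
    ext x
    simp only [Set.mem_preimage, Set.mem_ofPred_eq, Option.some_inj, exists_eq_left']
  obtain ⟨t, rfl⟩ : ∃ t, m = s₀ :: t := ⟨m.tail, (List.cons_head?_tail hfhm.1).symm⟩
  have hratio := habs.pathProb_div_pathProb_biasedKernel hP hP' s₀ t
    (hTF (firstHitPath_iff.1 hfhm).2.2.1) hpos
  have hL := hbdd _ _ ((firstHitPath_map_iff Subtype.val_injective).2 hfhm)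
  have hμ : (reachProb P' F' (α s₀)).toReal ≤ 1 :=
    ENNReal.toReal_le_of_le_ofReal zero_le_one (by simpa using reachProb_le_one hP' F' (α s₀))
  have hm : ((s₀ :: t).map some).reduceOption = s₀ :: t := by simp [List.reduceOption]
  simp only [hm, if_neg hnone, hratio]
  refine ⟨trivial, ?_, fun hL1 => by rw [hL1, one_mul]⟩
  calc |L ((s₀ :: t).map Subtype.val) * (reachProb P' F' (α s₀)).toReal|
      = |L ((s₀ :: t).map Subtype.val)| * (reachProb P' F' (α s₀)).toReal := by
        rw [abs_mul, abs_of_nonneg ENNReal.toReal_nonneg]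
    _ ≤ |L ((s₀ :: t).map Subtype.val)| := mul_le_of_le_one_right (abs_nonneg _) hμ
    _ ≤ B := hL

theorem stmt11 [Countable S] (P : S → S → ℝ≥0∞) (hP : IsStochastic P)
    (F : Set S) {S' : Type*} [Countable S']
    (P' : S' → S' → ℝ≥0∞) (hP' : IsStochastic P') (F' : Set S')
    (α : SA P F → S') (habs : IsAbstraction P F P' F' α)
    (T : Set S) (hTF : T ⊆ F) (habsT : ∀ s ∈ T, P s s = 1)
    (L : List S → ℝ) (B : ℝ)
    (hbdd : ∀ (s : S) (l : List S), FirstHitPath T s l → |L l| ≤ B)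
    (s₀ : SA P F) (l : List (Option (SA P F)))
    (hfh : FirstHitPath
      {x : Option (SA P F) | ∃ u : SA P F, x = some u ∧ u.val ∈ T}
      (some s₀) l)
    (hpos : 0 < pathProb (biasedKernel P F P' F' α) l) :
    (if none ∈ l then 0 else
      L (l.reduceOption.map Subtype.val) *
        (pathProb P (l.reduceOption.map Subtype.val) /
          pathProb (biasedKernel P F P' F' α) l).toReal)
      = L (l.reduceOption.map Subtype.val) * (reachProb P' F' (α s₀)).toReal ∧
    |(if none ∈ l then 0 else
      L (l.reduceOption.map Subtype.val) *
        (pathProb P (l.reduceOption.map Subtype.val) /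
          pathProb (biasedKernel P F P' F' α) l).toReal)| ≤ B ∧
    ((∀ l' : List S, L l' = 1) →
      (if none ∈ l then 0 else
        L (l.reduceOption.map Subtype.val) *
          (pathProb P (l.reduceOption.map Subtype.val) /
            pathProb (biasedKernel P F P' F' α) l).toReal)
        = (reachProb P' F' (α s₀)).toReal) :=
  stmt11_general P hP F P' hP' F' α habs T hTF L B hbdd s₀ l hfh hpos

end Thms
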